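/- arXiv:1912.00894 — 3 statements merged into one kernel-verified Lean document; each statement's English description precedes it below -/
import Mathlib

section
/- Let d = 1, let V ∈ C²(ℝ) have bounded second derivative with e^{−V} ∈ L¹(ℝ), and let π = Z^{−1} e^{−V} be the target probability density. Let h ∈ C(ℝ) ∩ C¹(ℝ∖{0}) be bounded with bounded derivative, and suppose h(x) → 0 and h'(x) → 0 as x → ±∞. Then lim_{|x|→∞} [ ∫_ℝ V''(y) h(x−y)² dπ(y) + ∫_ℝ h'(x−y)² dπ(y) ] = 0. Consequently, if h(0) > 0, there is no λ > 0 such that ∫_ℝ V''(y) h(x−y)² dπ(y) + ∫_ℝ h'(x−y)² dπ(y) ≥ λ h(0) for all x ∈ ℝ; i.e., exponential convergence near equilibrium fails for the translation-invariant kernel k(x,y) = h(x−y). -/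
/-!
Both integrals are integrals of `w (x - y)` against a fixed integrable weight (`V'' π` and `π`,
integrable because `V''` is bounded), with `w = h²` or `w = h'²` bounded and tending to zero at
`±∞`. Dominated convergence therefore sends them to zero as `x → ±∞`, and a quantity tending to
zero cannot stay above the positive constant `λ h(0)`.
-/

open MeasureTheory Real Filter Topology

lemma tendsto_integral_comp_sub_mul {μ : Measure ℝ} {l : Filter ℝ} [l.IsCountablyGenerated]
    (hl : ∀ y, Tendsto (· - y) l l) {w ρ : ℝ → ℝ} {M : ℝ} (hw : Measurable w)
    (hwM : ∀ t, |w t| ≤ M) (hwl : Tendsto w l (𝓝 0)) (hρ : Integrable ρ μ) :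
    Tendsto (fun x => ∫ y, w (x - y) * ρ y ∂μ) l (𝓝 0) := by
  have hmeas : ∀ x, AEStronglyMeasurable (fun y => w (x - y) * ρ y) μ := fun x =>
    (hw.comp (measurable_const.sub measurable_id)).aestronglyMeasurable.mul
      hρ.aestronglyMeasurable
  have hdom : ∀ x y, ‖w (x - y) * ρ y‖ ≤ M * ‖ρ y‖ := fun x y => by
    rw [norm_mul, Real.norm_eq_abs]
    exact mul_le_mul_of_nonneg_right (hwM _) (norm_nonneg _)
  have hlim : ∀ y, Tendsto (fun x => w (x - y) * ρ y) l (𝓝 0) := fun y => by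
    simpa using (hwl.comp (hl y)).mul_const (ρ y)
  simpa using tendsto_integral_filter_of_dominated_convergence (fun y => M * ‖ρ y‖)
    (.of_forall hmeas) (.of_forall fun x => .of_forall (hdom x)) (hρ.norm.const_mul M)
    (.of_forall hlim)

lemma tendsto_atTop_sub_const (y : ℝ) : Tendsto (· - y) atTop atTop :=
  tendsto_atTop_atTop.2 fun b => ⟨b + y, fun x hx => by linarith⟩

lemma tendsto_atBot_sub_const (y : ℝ) : Tendsto (· - y) atBot atBot :=
  tendsto_atBot_atBot.2 fun b => ⟨b + y, fun x hx => by linarith⟩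

lemma abs_sq_le_sq_of_abs_le {w : ℝ → ℝ} {M : ℝ} (hwM : ∀ t, |w t| ≤ M) (t : ℝ) :
    |w t ^ 2| ≤ M ^ 2 := by
  rw [abs_pow]
  exact pow_le_pow_left₀ (abs_nonneg _) (hwM t) 2

lemma tendsto_integral_mul_sq_comp_sub_add {l : Filter ℝ} [l.IsCountablyGenerated]
    (hl : ∀ y, Tendsto (· - y) l l) {c h ρ : ℝ → ℝ} {Mc Mh : ℝ} (hc : Measurable c)
    (hcM : ∀ y, |c y| ≤ Mc) (hh : Continuous h) (hhM : ∀ t, |h t| ≤ Mh)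
    (hh'M : ∀ t, |deriv h t| ≤ Mh) (hhl : Tendsto h l (𝓝 0))
    (hh'l : Tendsto (deriv h) l (𝓝 0)) (hρ : Integrable ρ) :
    Tendsto (fun x => (∫ y, c y * h (x - y) ^ 2 * ρ y) + ∫ y, deriv h (x - y) ^ 2 * ρ y)
      l (𝓝 0) := by
  have hcρ : Integrable (fun y => c y * ρ y) :=
    hρ.bdd_mul hc.aestronglyMeasurable (Eventually.of_forall hcM)
  have hfirst := tendsto_integral_comp_sub_mul hl (hh.measurable.pow_const 2)
    (abs_sq_le_sq_of_abs_le hhM) (by simpa using hhl.pow 2) hcρ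
  have hsecond := tendsto_integral_comp_sub_mul hl ((measurable_deriv h).pow_const 2)
    (abs_sq_le_sq_of_abs_le hh'M) (by simpa using hh'l.pow 2) hρ
  simp_rw [mul_comm (c _), mul_assoc]
  simpa using hfirst.add hsecond

theorem stmt_10_general
    (V : ℝ → ℝ)
    (hV'' : ∃ M, ∀ x, |deriv (deriv V) x| ≤ M)
    (hVint : Integrable fun x => exp (-V x))
    (Z : ℝ)
    (piD : ℝ → ℝ) (hpiD : ∀ x, piD x = exp (-V x) / Z)
    -- `h ∈ C(ℝ) ∩ C¹(ℝ∖{0})`, bounded with bounded derivative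
    (h : ℝ → ℝ)
    (hc : Continuous h)
    (hbdd : ∃ M, (∀ x, |h x| ≤ M) ∧ ∀ x, |deriv h x| ≤ M)
    -- `h(x) → 0` and `h'(x) → 0` as `x → ±∞`
    (hlim1 : Tendsto h atTop (nhds 0)) (hlim2 : Tendsto h atBot (nhds 0))
    (hlim3 : Tendsto (deriv h) atTop (nhds 0)) (hlim4 : Tendsto (deriv h) atBot (nhds 0)) :
    -- the near-equilibrium curvature functional at `φ_x = h(x − ·)` tends to 0
    (Tendsto
        (fun x => (∫ y, deriv (deriv V) y * (h (x - y)) ^ 2 * piD y)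
          + ∫ y, (deriv h (x - y)) ^ 2 * piD y) atTop (nhds 0)
      ∧ Tendsto
          (fun x => (∫ y, deriv (deriv V) y * (h (x - y)) ^ 2 * piD y)
            + ∫ y, (deriv h (x - y)) ^ 2 * piD y) atBot (nhds 0))
    -- hence no uniform lower bound `λ h(0)` with `λ > 0` is possible
    ∧ (0 < h 0 →
        ¬ ∃ lam : ℝ, 0 < lam ∧
            ∀ x, lam * h 0
              ≤ (∫ y, deriv (deriv V) y * (h (x - y)) ^ 2 * piD y)
                + ∫ y, (deriv h (x - y)) ^ 2 * piD y) := by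
  obtain ⟨MV, hMV⟩ := hV''
  obtain ⟨Mh, hhM, hh'M⟩ := hbdd
  have hπ : Integrable piD := by
    rw [funext hpiD]
    exact hVint.div_const Z
  have hatTop := tendsto_integral_mul_sq_comp_sub_add tendsto_atTop_sub_const
    (measurable_deriv _) hMV hc hhM hh'M hlim1 hlim3 hπ
  have hatBot := tendsto_integral_mul_sq_comp_sub_add tendsto_atBot_sub_const
    (measurable_deriv _) hMV hc hhM hh'M hlim2 hlim4 hπ
  refine ⟨⟨hatTop, hatBot⟩, fun hh0 ⟨lam, hlam, hbound⟩ => ?_⟩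
  obtain ⟨x, hx⟩ := (hatTop.eventually_lt_const (mul_pos hlam hh0)).exists
  exact (hbound x).not_gt hx

/-- no exponential convergence near equilibrium for bounded
translation-invariant kernels with decaying tails, in dimension one. -/
theorem stmt_10
    (V : ℝ → ℝ) (hV : ContDiff ℝ 2 V)
    (hV'' : ∃ M, ∀ x, |deriv (deriv V) x| ≤ M)
    (hVint : Integrable fun x => exp (-V x))
    (Z : ℝ) (hZ : Z = ∫ x, exp (-V x))
    (piD : ℝ → ℝ) (hpiD : ∀ x, piD x = exp (-V x) / Z)
    -- `h ∈ C(ℝ) ∩ C¹(ℝ∖{0})`, bounded with bounded derivative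
    (h : ℝ → ℝ)
    (hc : Continuous h)
    (hc1 : ContDiffOn ℝ 1 h {(0 : ℝ)}ᶜ)
    (hbdd : ∃ M, (∀ x, |h x| ≤ M) ∧ ∀ x, |deriv h x| ≤ M)
    -- `h(x) → 0` and `h'(x) → 0` as `x → ±∞`
    (hlim1 : Tendsto h atTop (nhds 0)) (hlim2 : Tendsto h atBot (nhds 0))
    (hlim3 : Tendsto (deriv h) atTop (nhds 0)) (hlim4 : Tendsto (deriv h) atBot (nhds 0)) :
    -- the near-equilibrium curvature functional at `φ_x = h(x − ·)` tends to 0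
    (Tendsto
        (fun x => (∫ y, deriv (deriv V) y * (h (x - y)) ^ 2 * piD y)
          + ∫ y, (deriv h (x - y)) ^ 2 * piD y) atTop (nhds 0)
      ∧ Tendsto
          (fun x => (∫ y, deriv (deriv V) y * (h (x - y)) ^ 2 * piD y)
            + ∫ y, (deriv h (x - y)) ^ 2 * piD y) atBot (nhds 0))
    -- hence no uniform lower bound `λ h(0)` with `λ > 0` is possible
    ∧ (0 < h 0 →
        ¬ ∃ lam : ℝ, 0 < lam ∧
            ∀ x, lam * h 0
              ≤ (∫ y, deriv (deriv V) y * (h (x - y)) ^ 2 * piD y)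
                + ∫ y, (deriv h (x - y)) ^ 2 * piD y) :=
  stmt_10_general V hV'' hVint Z piD hpiD h hc hbdd hlim1 hlim2 hlim3 hlim4
end

section
/- Let d = 1, V ∈ C²(ℝ) with bounded second derivative and e^{−V} ∈ L¹(ℝ), Z = ∫ e^{−V} dx, π = Z^{−1} e^{−V}, and suppose there exists λ̃ > 0 such that V''(x) + (V'(x))²/2 ≥ λ̃ for all x ∈ ℝ. Then for every f ∈ C_c^∞(ℝ): ∫_ℝ [ V''(x) (π(x)^{−1/2} f(x))² + ( (π^{−1/2} f)'(x) )² ] π(x) dx ≥ min(1, λ̃/2) ∫_ℝ [ f(x)² + (f'(x))² ] dx. -/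
/-!
Since `π^{-1/2} f = √Z e^{V/2} f` has derivative `√Z e^{V/2} (f' + f V'/2)`, the weight `π`
cancels and the integrand becomes `V'' f² + (f' + f V'/2)²`. The cross term `f f' V'` integrates
by parts to `-∫ f² V''/2`, leaving `∫ f'² + f² (V''/2 + V'²/4)`, and the hypothesis bounds the
potential `V''/2 + V'²/4` below by `λ̃/2`.
-/

open MeasureTheory Real

theorem HasCompactSupport.integrable_of_eq_zero_of_deriv_eq_zero {f g : ℝ → ℝ}
    (hf : HasCompactSupport f) (hg : Continuous g)
    (h : ∀ x, f x = 0 → deriv f x = 0 → g x = 0) : Integrable g := by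
  refine hg.integrable_of_hasCompactSupport (.intro hf fun x hx => h x ?_ ?_)
  · exact image_eq_zero_of_notMem_tsupport hx
  · exact Function.notMem_support.mp fun hx' => hx (support_deriv_subset hx')

theorem div_sqrt_exp_neg_div (a v Z : ℝ) : a / √(exp (-v) / Z) = a * √Z * exp (v / 2) := by
  rw [sqrt_div (exp_nonneg _), ← exp_half, div_div_eq_mul_div, div_eq_mul_inv, ← exp_neg, neg_div,
    neg_neg]

theorem hasDerivAt_div_sqrt_exp_neg_div {f V : ℝ → ℝ} {f' v x : ℝ} (hf : HasDerivAt f f' x)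
    (hV : HasDerivAt V v x) (Z : ℝ) :
    HasDerivAt (fun y => f y / √(exp (-V y) / Z)) ((f' + f x * v / 2) * √Z * exp (V x / 2)) x := by
  simp_rw [div_sqrt_exp_neg_div]
  exact ((hf.mul_const √Z).mul (hV.div_const 2).exp).congr_deriv (by ring)

theorem mul_sq_div_sqrt_add_sq_mul_exp_neg_div (w a b v : ℝ) {Z : ℝ} (hZ : 0 < Z) :
    (w * (a / √(exp (-v) / Z)) ^ 2 + (b * √Z * exp (v / 2)) ^ 2) * (exp (-v) / Z)
      = w * a ^ 2 + b ^ 2 := by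
  have hsqrt : √Z ^ 2 = Z := sq_sqrt hZ.le
  have hexp : exp (v / 2) ^ 2 * exp (-v) = 1 := by
    rw [← exp_nat_mul, ← exp_add]; ring_nf; exact exp_zero
  rw [div_sqrt_exp_neg_div]
  field_simp
  linear_combination (w * a ^ 2 + b ^ 2) * (exp (v / 2) ^ 2 * exp (-v) * hsqrt + Z * hexp)

section GroundState

variable {f u : ℝ → ℝ}

theorem integral_deriv_mul_sq_add_sq_eq (hf : ContDiff ℝ 1 f) (hfc : HasCompactSupport f)
    (hu : ContDiff ℝ 1 u) :
    ∫ x, (deriv u x * f x ^ 2 + (deriv f x + f x * u x / 2) ^ 2)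
      = ∫ x, (deriv f x ^ 2 + f x ^ 2 * (deriv u x / 2 + u x ^ 2 / 4)) := by
  have hf' := hf.continuous_deriv le_rfl
  have hu' := hu.continuous_deriv le_rfl
  have hfcont := hf.continuous
  have hucont := hu.continuous
  have hboundary (x : ℝ) : HasDerivAt (fun y => f y ^ 2 * u y / 2)
      (f x * deriv f x * u x + f x ^ 2 * deriv u x / 2) x :=
    (((hf.differentiable one_ne_zero x).hasDerivAt.fun_pow 2).mul
      (hu.differentiable one_ne_zero x).hasDerivAt).div_const 2 |>.congr_deriv (by ring)
  have hzero : ∫ x, (f x * deriv f x * u x + f x ^ 2 * deriv u x / 2) = 0 :=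
    integral_eq_zero_of_hasDerivAt_of_integrable hboundary
      (hfc.integrable_of_eq_zero_of_deriv_eq_zero (by fun_prop) fun x h0 h1 => by simp [h0, h1])
      (hfc.integrable_of_eq_zero_of_deriv_eq_zero (by fun_prop) fun x h0 _ => by simp [h0])
  calc ∫ x, (deriv u x * f x ^ 2 + (deriv f x + f x * u x / 2) ^ 2)
      = ∫ x, ((deriv f x ^ 2 + f x ^ 2 * (deriv u x / 2 + u x ^ 2 / 4))
          + (f x * deriv f x * u x + f x ^ 2 * deriv u x / 2)) := by
        congr 1; ext x; ring
    _ = ∫ x, (deriv f x ^ 2 + f x ^ 2 * (deriv u x / 2 + u x ^ 2 / 4)) := by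
        rw [integral_add, hzero, add_zero]
        · exact hfc.integrable_of_eq_zero_of_deriv_eq_zero (by fun_prop)
            fun x h0 h1 => by simp [h0, h1]
        · exact hfc.integrable_of_eq_zero_of_deriv_eq_zero (by fun_prop)
            fun x h0 h1 => by simp [h0, h1]

theorem min_mul_integral_sq_add_deriv_sq_le (hf : ContDiff ℝ 1 f) (hfc : HasCompactSupport f)
    (hu : ContDiff ℝ 1 u) {lam : ℝ} (hlam : ∀ x, lam ≤ deriv u x + u x ^ 2 / 2) :
    min 1 (lam / 2) * ∫ x, (f x ^ 2 + deriv f x ^ 2)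
      ≤ ∫ x, (deriv u x * f x ^ 2 + (deriv f x + f x * u x / 2) ^ 2) := by
  have hf' := hf.continuous_deriv le_rfl
  have hu' := hu.continuous_deriv le_rfl
  have hfcont := hf.continuous
  have hucont := hu.continuous
  rw [integral_deriv_mul_sq_add_sq_eq hf hfc hu, ← integral_const_mul]
  refine integral_mono
    (hfc.integrable_of_eq_zero_of_deriv_eq_zero (by fun_prop) fun x h0 h1 => by simp [h0, h1])
    (hfc.integrable_of_eq_zero_of_deriv_eq_zero (by fun_prop) fun x h0 h1 => by simp [h0, h1])
    fun x => ?_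
  have hpotential : min 1 (lam / 2) ≤ deriv u x / 2 + u x ^ 2 / 4 := by
    linarith [min_le_right 1 (lam / 2), hlam x]
  linarith [mul_le_mul_of_nonneg_right (min_le_left 1 (lam / 2)) (sq_nonneg (deriv f x)),
    mul_le_mul_of_nonneg_right hpotential (sq_nonneg (f x))]

end GroundState

theorem stmt_12_general
    (V : ℝ → ℝ) (hV : ContDiff ℝ 2 V)
    (hVint : Integrable fun x => exp (-V x))
    (Z : ℝ) (hZ : Z = ∫ x, exp (-V x))
    (piD : ℝ → ℝ) (hpiD : ∀ x, piD x = exp (-V x) / Z)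
    (lamt : ℝ)
    (hBE : ∀ x, lamt ≤ deriv (deriv V) x + (deriv V x) ^ 2 / 2) :
    ∀ f : ℝ → ℝ, ContDiff ℝ (⊤ : ℕ∞) f → HasCompactSupport f →
      min 1 (lamt / 2) * ∫ x, ((f x) ^ 2 + (deriv f x) ^ 2)
        ≤ ∫ x, (deriv (deriv V) x * (f x / Real.sqrt (piD x)) ^ 2
            + (deriv (fun y => f y / Real.sqrt (piD y)) x) ^ 2) * piD x := by
  intro f hf hfc
  obtain rfl : piD = fun x => exp (-V x) / Z := funext hpiD
  have hZpos : 0 < Z := hZ ▸ integral_exp_pos hVint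
  have hf1 : ContDiff ℝ 1 f := hf.of_le (by norm_num)
  have hderiv (x : ℝ) : deriv (fun y => f y / √(exp (-V y) / Z)) x
      = (deriv f x + f x * deriv V x / 2) * √Z * exp (V x / 2) :=
    (hasDerivAt_div_sqrt_exp_neg_div (hf1.differentiable one_ne_zero x).hasDerivAt
      (hV.differentiable two_ne_zero x).hasDerivAt Z).deriv
  simp_rw [hderiv, mul_sq_div_sqrt_add_sq_mul_exp_neg_div _ _ _ _ hZpos]
  exact min_mul_integral_sq_add_deriv_sq_le hf1 hfc (hV.deriv' (n := 1)) hBE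

/-- exponential decay near equilibrium for the weighted Matérn
kernel. If `V'' + (V')²/2 ≥ λ̃ > 0`, then for every `f ∈ C_c^∞(ℝ)` the curvature
functional dominates `min(1, λ̃/2)` times the `H¹(ℝ)`-norm of `f` squared. -/
theorem stmt_12
    (V : ℝ → ℝ) (hV : ContDiff ℝ 2 V)
    (hV'' : ∃ M, ∀ x, |deriv (deriv V) x| ≤ M)
    (hVint : Integrable fun x => exp (-V x))
    (Z : ℝ) (hZ : Z = ∫ x, exp (-V x))
    (piD : ℝ → ℝ) (hpiD : ∀ x, piD x = exp (-V x) / Z)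
    (lamt : ℝ) (hlamt : 0 < lamt)
    (hBE : ∀ x, lamt ≤ deriv (deriv V) x + (deriv V x) ^ 2 / 2) :
    ∀ f : ℝ → ℝ, ContDiff ℝ (⊤ : ℕ∞) f → HasCompactSupport f →
      min 1 (lamt / 2) * ∫ x, ((f x) ^ 2 + (deriv f x) ^ 2)
        ≤ ∫ x, (deriv (deriv V) x * (f x / Real.sqrt (piD x)) ^ 2
            + (deriv (fun y => f y / Real.sqrt (piD y)) x) ^ 2) * piD x :=
  stmt_12_general V hV hVint Z hZ piD hpiD lamt hBE
end

section
/- Let d = 1, α > 0, V(x) = (α/2) x², and k(x,y) = xy. Let ρ be a probability measure on ℝ with finite second moment. Then the curvature kernel q[ρ](y,z) = [∫ ∂_x( e^{−V(x)} x y ) e^{V(x)} dρ(x)] · ∂_y(yz) − [∫ ∂_y ∂_x( e^{−V(x)} x y ) e^{V(x)} dρ(x)] · yz − ∫ ∂_x( e^{V(x)} ∂_x( e^{−V(x)} x y ) ) x z dρ(x) satisfies q[ρ](y,z) = 2α yz ∫_ℝ x² dρ(x) for all y, z ∈ ℝ. Consequently, for every smooth Ψ, Σ ∫∫ Ψ'(y)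 q[ρ](y,z) Ψ'(z) dρ(y) dρ(z) = 2α (∫ x² dρ) ∫∫ Ψ'(y) k(y,z) Ψ'(z) dρ(y) dρ(z), so the curvature lower bound holds with λ = 2α ∫ x² dρ(x). -/
/-!
With `V(x) = αx²/2` and `k(x,y) = xy` one has `e^{V} ∂ₓ(e^{-V} x y) = y(1 - αx²)`. The first
term of `q[ρ](y,z)` is therefore `yz ∫ (1 - αx²) dρ`, which is exactly the second term, so the two
cancel; the third integrand is `∂ₓ(y(1 - αx²)) · xz = -2αyz x²`, which leaves
`q[ρ](y,z) = 2α yz ∫ x² dρ`. The kernel is thus a constant multiple of `k`, and the constant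
factors out of the Hessian form.
-/

open MeasureTheory Real

theorem hasDerivAt_exp_neg_mul {V g : ℝ → ℝ} {V' g' x : ℝ} (hV : HasDerivAt V V' x)
    (hg : HasDerivAt g g' x) :
    HasDerivAt (fun t => exp (-V t) * g t) (exp (-V x) * (g' - V' * g x)) x :=
  (hV.neg.exp.mul hg).congr_deriv (by rw [Pi.neg_apply]; ring)

section GaussianPolynomial

variable (α y x : ℝ)

theorem hasDerivAt_half_mul_sq : HasDerivAt (fun t => α / 2 * t ^ 2) (α * x) x :=
  ((hasDerivAt_pow 2 x).const_mul (α / 2)).congr_deriv (by push_cast; ring)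

theorem deriv_gaussian_mul_linear :
    deriv (fun t => exp (-(α / 2 * t ^ 2)) * (t * y)) x
      = exp (-(α / 2 * x ^ 2)) * (1 - α * x ^ 2) * y := by
  rw [(hasDerivAt_exp_neg_mul (hasDerivAt_half_mul_sq α x)
    ((hasDerivAt_id' x).mul_const y)).deriv]
  ring

theorem exp_mul_deriv_gaussian_mul_linear :
    exp (α / 2 * x ^ 2) * deriv (fun t => exp (-(α / 2 * t ^ 2)) * (t * y)) x
      = y * (1 - α * x ^ 2) := by
  rw [deriv_gaussian_mul_linear, exp_neg]
  field_simp

theorem deriv_gaussian_mul_linear_mul_exp :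
    deriv (fun t => exp (-(α / 2 * t ^ 2)) * (t * y)) x * exp (α / 2 * x ^ 2)
      = y * (1 - α * x ^ 2) := by
  rw [mul_comm, exp_mul_deriv_gaussian_mul_linear]

theorem deriv_deriv_gaussian_mul_linear_mul_exp :
    deriv (fun y' => deriv (fun t => exp (-(α / 2 * t ^ 2)) * (t * y')) x) y
        * exp (α / 2 * x ^ 2) = 1 - α * x ^ 2 := by
  simp only [deriv_gaussian_mul_linear, deriv_const_mul_id']
  rw [exp_neg]
  field_simp

theorem deriv_exp_mul_deriv_gaussian_mul_linear :
    deriv (fun t => exp (α / 2 * t ^ 2) * deriv (fun s => exp (-(α / 2 * s ^ 2)) * (s * y)) t) x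
      = -(2 * α * x * y) := by
  simp only [exp_mul_deriv_gaussian_mul_linear]
  rw [((((hasDerivAt_pow 2 x).const_mul α).const_sub 1).const_mul y).deriv]
  push_cast
  ring

end GaussianPolynomial

theorem integral_integral_mul_const_mul_mul {X Y : Type*} [MeasurableSpace X] [MeasurableSpace Y]
    (μ : Measure X) (ν : Measure Y) (f : X → ℝ) (g : Y → ℝ) (k : X → Y → ℝ) (c : ℝ) :
    ∫ y, (∫ z, f y * (c * k y z) * g z ∂ν) ∂μ = c * ∫ y, (∫ z, f y * k y z * g z ∂ν) ∂μ := by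
  simp only [mul_left_comm _ c, mul_assoc c, integral_const_mul]

theorem stmt_14_general (α : ℝ)
    (ρ : Measure ℝ)
    (q : ℝ → ℝ → ℝ)
    (hq : ∀ y z, q y z =
      (∫ x, deriv (fun x' => exp (-(α / 2 * x' ^ 2)) * (x' * y)) x * exp (α / 2 * x ^ 2) ∂ρ)
          * deriv (fun y' => y' * z) y
        - (∫ x, deriv (fun y' => deriv (fun x' => exp (-(α / 2 * x' ^ 2)) * (x' * y')) x) y
              * exp (α / 2 * x ^ 2) ∂ρ) * (y * z)
        - ∫ x, deriv (fun x' =>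
              exp (α / 2 * x' ^ 2) * deriv (fun x'' => exp (-(α / 2 * x'' ^ 2)) * (x'' * y)) x') x
            * (x * z) ∂ρ) :
    -- `q[ρ](y,z) = 2α yz ∫ x² dρ`
    (∀ y z, q y z = 2 * α * (y * z) * ∫ x, x ^ 2 ∂ρ)
    -- hence for every smooth `Ψ` the Hessian form equals `λ` times the metric term,
    -- and in particular the curvature lower bound holds with `λ = 2α ∫ x² dρ`
    ∧ ∀ Ψ : ℝ → ℝ, ContDiff ℝ (⊤ : ℕ∞) Ψ →
        (∫ y, (∫ z, deriv Ψ y * q y z * deriv Ψ z ∂ρ) ∂ρ)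
            = (2 * α * ∫ x, x ^ 2 ∂ρ) * ∫ y, (∫ z, deriv Ψ y * (y * z) * deriv Ψ z ∂ρ) ∂ρ
          ∧ (2 * α * ∫ x, x ^ 2 ∂ρ) * ∫ y, (∫ z, deriv Ψ y * (y * z) * deriv Ψ z ∂ρ) ∂ρ
              ≤ ∫ y, (∫ z, deriv Ψ y * q y z * deriv Ψ z ∂ρ) ∂ρ := by
  have hkernel : ∀ y z, q y z = 2 * α * (y * z) * ∫ x, x ^ 2 ∂ρ := by
    intro y z
    have hthird : ∀ x, -(2 * α * x * y) * (x * z) = -(2 * α * y * z) * x ^ 2 := fun x => by ring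
    simp only [hq, deriv_gaussian_mul_linear_mul_exp, deriv_deriv_gaussian_mul_linear_mul_exp,
      deriv_exp_mul_deriv_gaussian_mul_linear, hthird, integral_const_mul, deriv_mul_const_field',
      deriv_id'']
    ring
  have hform : ∀ Ψ : ℝ → ℝ, (∫ y, (∫ z, deriv Ψ y * q y z * deriv Ψ z ∂ρ) ∂ρ)
      = (2 * α * ∫ x, x ^ 2 ∂ρ) * ∫ y, (∫ z, deriv Ψ y * (y * z) * deriv Ψ z ∂ρ) ∂ρ := by
    intro Ψ
    rw [← integral_integral_mul_const_mul_mul]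
    simp only [hkernel, mul_right_comm (2 * α) _ (∫ x, x ^ 2 ∂ρ)]
  exact ⟨hkernel, fun Ψ _ => ⟨hform Ψ, (hform Ψ).ge⟩⟩

/-- polynomial kernel, Gaussian target, `d = 1`. For
`V(x) = (α/2)x²` and `k(x,y) = xy`, the curvature kernel satisfies
`q[ρ](y,z) = 2α yz ∫ x² dρ`, so the curvature lower bound holds with
`λ = 2α ∫ x² dρ`. -/
theorem stmt_14 (α : ℝ) (hα : 0 < α)
    (ρ : Measure ℝ) [IsProbabilityMeasure ρ]
    (hmom : Integrable (fun x => x ^ 2) ρ)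
    (q : ℝ → ℝ → ℝ)
    (hq : ∀ y z, q y z =
      (∫ x, deriv (fun x' => exp (-(α / 2 * x' ^ 2)) * (x' * y)) x * exp (α / 2 * x ^ 2) ∂ρ)
          * deriv (fun y' => y' * z) y
        - (∫ x, deriv (fun y' => deriv (fun x' => exp (-(α / 2 * x' ^ 2)) * (x' * y')) x) y
              * exp (α / 2 * x ^ 2) ∂ρ) * (y * z)
        - ∫ x, deriv (fun x' =>
              exp (α / 2 * x' ^ 2) * deriv (fun x'' => exp (-(α / 2 * x'' ^ 2)) * (x'' * y)) x') x
            * (x * z) ∂ρ) :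
    -- `q[ρ](y,z) = 2α yz ∫ x² dρ`
    (∀ y z, q y z = 2 * α * (y * z) * ∫ x, x ^ 2 ∂ρ)
    -- hence for every smooth `Ψ` the Hessian form equals `λ` times the metric term,
    -- and in particular the curvature lower bound holds with `λ = 2α ∫ x² dρ`
    ∧ ∀ Ψ : ℝ → ℝ, ContDiff ℝ (⊤ : ℕ∞) Ψ →
        (∫ y, (∫ z, deriv Ψ y * q y z * deriv Ψ z ∂ρ) ∂ρ)
            = (2 * α * ∫ x, x ^ 2 ∂ρ) * ∫ y, (∫ z, deriv Ψ y * (y * z) * deriv Ψ z ∂ρ) ∂ρ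
          ∧ (2 * α * ∫ x, x ^ 2 ∂ρ) * ∫ y, (∫ z, deriv Ψ y * (y * z) * deriv Ψ z ∂ρ) ∂ρ
              ≤ ∫ y, (∫ z, deriv Ψ y * q y z * deriv Ψ z ∂ρ) ∂ρ :=
  stmt_14_general α ρ q hq
end
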